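/- arXiv:1111.2111 — 3 statements merged into one kernel-verified Lean document; each statement's English description precedes it below -/
import Mathlib

section
/- Let A be an m × n real matrix, W an m × k real matrix, and H a k × n real matrix, all with nonnegative entries, and suppose (WᵀWH)_{ij} > 0 for all i, j. Define the updated matrix H' entrywise by H'_{ij} = H_{ij} · (WᵀA)_{ij} / (WᵀWH)_{ij}. Then ‖A − WH'‖² ≤ ‖A − WH‖², i.e., the squared Euclidean distance ‖A − WH‖² is non-increasing under the multiplicative H-update. -/
open Matrix

/-- One column of the Lee–Seung update is non-increasing for the least squares
objective. -/
lemma nmf_col_step {m k : ℕ} (a : Fin m → ℝ) (W : Matrix (Fin m) (Fin k) ℝ)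
    (h h' : Fin k → ℝ) (hW : ∀ p i, 0 ≤ W p i) (hh : ∀ i, 0 ≤ h i)
    (hu : ∀ i, 0 < ∑ i', (∑ p, W p i * W p i') * h i')
    (hh' : ∀ i, h' i = h i * (∑ p, W p i * a p) /
        (∑ i', (∑ p, W p i * W p i') * h i')) :
    ∑ p, (a p - ∑ i, W p i * h' i) ^ 2 ≤ ∑ p, (a p - ∑ i, W p i * h i) ^ 2 := by
  set K : Fin k → Fin k → ℝ := fun i i' => ∑ p, W p i * W p i' with hK
  set u : Fin k → ℝ := fun i => ∑ i', K i i' * h i' with hudef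
  set b : Fin k → ℝ := fun i => ∑ p, W p i * a p with hbdef
  set g : Fin k → ℝ := fun i => u i - b i with hgdef
  set c : Fin k → ℝ := fun i => -g i / u i with hcdef
  set d : Fin k → ℝ := fun i => h i * c i with hddef
  have hKnn : ∀ i i', 0 ≤ K i i' := fun i i' =>
    Finset.sum_nonneg fun p _ => mul_nonneg (hW p i) (hW p i')
  have hKsym : ∀ i i', K i i' = K i' i := fun i i' =>
    Finset.sum_congr rfl fun p _ => mul_comm _ _
  have hupos : ∀ i, 0 < u i := fun i => hu i
  have hune : ∀ i, u i ≠ 0 := fun i => (hupos i).ne'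
  have hcu : ∀ i, c i * u i = -g i := fun i => div_mul_cancel₀ _ (hune i)
  have hd : ∀ i, h' i = h i + d i := by
    intro i
    have h1 : h i + d i = h i * b i / u i := by
      rw [eq_div_iff (hune i)]
      simp only [hddef, hcdef, hgdef]
      have hx : -(u i - b i) / u i * u i = -(u i - b i) := div_mul_cancel₀ _ (hune i)
      calc (h i + h i * (-(u i - b i) / u i)) * u i
          = h i * u i + h i * (-(u i - b i) / u i * u i) := by ring
        _ = h i * u i + h i * (-(u i - b i)) := by rw [hx]
        _ = h i * b i := by ring
    have h2 : h' i = h i * b i / u i := hh' i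
    rw [h2]
    exact h1.symm
  set r : Fin m → ℝ := fun p => a p - ∑ i, W p i * h i with hrdef
  set s : Fin m → ℝ := fun p => ∑ i, W p i * d i with hsdef
  have e1 : ∀ p, a p - ∑ i, W p i * h' i = r p - s p := by
    intro p
    simp only [hrdef, hsdef]
    rw [show (∑ i, W p i * h' i) = ∑ i, (W p i * h i + W p i * d i) from
      Finset.sum_congr rfl fun i _ => by rw [hd i]; ring]
    rw [Finset.sum_add_distrib]
    ring
  have e3 : ∑ p, r p * s p = ∑ i, (b i - u i) * d i := by
    calc ∑ p, r p * s p = ∑ p, ∑ i, r p * W p i * d i := by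
          refine Finset.sum_congr rfl fun p _ => ?_
          simp only [hsdef]
          rw [Finset.mul_sum]
          exact Finset.sum_congr rfl fun i _ => by ring
      _ = ∑ i, ∑ p, r p * W p i * d i := Finset.sum_comm
      _ = ∑ i, (b i - u i) * d i := by
          refine Finset.sum_congr rfl fun i _ => ?_
          rw [← Finset.sum_mul]
          congr 1
          have step1 : ∑ p, r p * W p i
              = (∑ p, W p i * a p) - ∑ p, ∑ i', W p i * (W p i' * h i') := by
            rw [← Finset.sum_sub_distrib]
            refine Finset.sum_congr rfl fun p _ => ?_
            simp only [hrdef, sub_mul, Finset.sum_mul]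
            congr 1
            · ring
            · exact Finset.sum_congr rfl fun i' _ => by ring
          rw [step1]
          have step2 : (∑ p, ∑ i', W p i * (W p i' * h i')) = u i := by
            rw [Finset.sum_comm]
            show _ = ∑ i', K i i' * h i'
            refine Finset.sum_congr rfl fun i' _ => ?_
            show _ = (∑ p, W p i * W p i') * h i'
            rw [Finset.sum_mul]
            exact Finset.sum_congr rfl fun p _ => by ring
          rw [step2]
  have e4 : ∑ p, s p ^ 2 = ∑ i, ∑ i', K i i' * d i * d i' := by
    calc ∑ p, s p ^ 2 = ∑ p, ∑ i, ∑ i', W p i * d i * (W p i' * d i') := by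
          refine Finset.sum_congr rfl fun p _ => ?_
          simp only [hsdef]
          rw [sq, Finset.sum_mul_sum]
      _ = ∑ i, ∑ i', ∑ p, W p i * d i * (W p i' * d i') := by
          rw [Finset.sum_comm]
          exact Finset.sum_congr rfl fun i _ => Finset.sum_comm
      _ = ∑ i, ∑ i', K i i' * d i * d i' := by
          refine Finset.sum_congr rfl fun i _ => Finset.sum_congr rfl fun i' _ => ?_
          show _ = (∑ p, W p i * W p i') * d i * d i'
          rw [Finset.sum_mul, Finset.sum_mul]
          exact Finset.sum_congr rfl fun p _ => by ring
  have key1 : ∑ p, (a p - ∑ i, W p i * h' i) ^ 2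
      = (∑ p, (a p - ∑ i, W p i * h i) ^ 2) + 2 * ∑ i, g i * d i
        + ∑ i, ∑ i', K i i' * d i * d i' := by
    have expand : ∑ p, (a p - ∑ i, W p i * h' i) ^ 2
        = ∑ p, (r p ^ 2 - 2 * (r p * s p) + s p ^ 2) := by
      refine Finset.sum_congr rfl fun p _ => ?_
      rw [e1 p]; ring
    rw [expand, Finset.sum_add_distrib, Finset.sum_sub_distrib, ← Finset.mul_sum, e3, e4]
    have hr2 : ∑ p, r p ^ 2 = ∑ p, (a p - ∑ i, W p i * h i) ^ 2 := rfl
    rw [hr2]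
    have hgd : ∑ i, g i * d i = -∑ i, (b i - u i) * d i := by
      rw [← Finset.sum_neg_distrib]
      exact Finset.sum_congr rfl fun i _ => by simp only [hgdef]; ring
    rw [hgd]; ring
  have key2 : ∑ i, ∑ i', K i i' * d i * d i' ≤ ∑ i, u i * h i * c i ^ 2 := by
    have expand : ∑ i, u i * h i * c i ^ 2
        = ∑ i, ∑ i', K i i' * h i' * (h i * c i ^ 2) := by
      refine Finset.sum_congr rfl fun i _ => ?_
      rw [show u i = ∑ i', K i i' * h i' from rfl, Finset.sum_mul, Finset.sum_mul]
      exact Finset.sum_congr rfl fun i' _ => by ring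
    have half : (∑ i, u i * h i * c i ^ 2) - ∑ i, ∑ i', K i i' * d i * d i'
        = (1 / 2) * ∑ i, ∑ i', K i i' * h i * h i' * (c i - c i') ^ 2 := by
      rw [expand]
      have swap : ∑ i, ∑ i', K i i' * h i * h i' * c i' ^ 2
          = ∑ i, ∑ i', K i i' * h i' * (h i * c i ^ 2) := by
        rw [Finset.sum_comm]
        refine Finset.sum_congr rfl fun i _ => Finset.sum_congr rfl fun i' _ => ?_
        rw [hKsym i' i]; ring
      have expand2 : ∑ i, ∑ i', K i i' * h i * h i' * (c i - c i') ^ 2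
          = ∑ i, ∑ i', (K i i' * h i' * (h i * c i ^ 2)
              - 2 * (K i i' * d i * d i') + K i i' * h i * h i' * c i' ^ 2) := by
        refine Finset.sum_congr rfl fun i _ => Finset.sum_congr rfl fun i' _ => ?_
        simp only [hddef]; ring
      rw [expand2]
      simp only [Finset.sum_add_distrib, Finset.sum_sub_distrib, ← Finset.mul_sum, swap]
      ring
    have nn : 0 ≤ ∑ i, ∑ i', K i i' * h i * h i' * (c i - c i') ^ 2 :=
      Finset.sum_nonneg fun i _ => Finset.sum_nonneg fun i' _ =>
        mul_nonneg (mul_nonneg (mul_nonneg (hKnn i i') (hh i)) (hh i')) (sq_nonneg _)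
    nlinarith [half, nn]
  have key3 : ∑ i, g i * d i = -∑ i, u i * h i * c i ^ 2 := by
    rw [← Finset.sum_neg_distrib]
    refine Finset.sum_congr rfl fun i _ => ?_
    have hgi : g i = -(c i * u i) := by rw [hcu i]; ring
    simp only [hddef]
    rw [hgi]; ring
  have nnS : 0 ≤ ∑ i, u i * h i * c i ^ 2 :=
    Finset.sum_nonneg fun i _ =>
      mul_nonneg (mul_nonneg (le_of_lt (hupos i)) (hh i)) (sq_nonneg _)
  rw [key1, key3]
  nlinarith [key2, nnS]

/-- The GNMF divergence `‖A - WH‖²` (squared Frobenius norm) is non-increasing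
under the Lee–Seung multiplicative update of `H`. -/
theorem nmf_H_update_nonincreasing
    {m n k : ℕ}
    (A : Matrix (Fin m) (Fin n) ℝ)
    (W : Matrix (Fin m) (Fin k) ℝ)
    (H : Matrix (Fin k) (Fin n) ℝ)
    (hA : ∀ i j, 0 ≤ A i j)
    (hW : ∀ i j, 0 ≤ W i j)
    (hH : ∀ i j, 0 ≤ H i j)
    (hpos : ∀ i j, 0 < (Wᵀ * W * H) i j)
    (H' : Matrix (Fin k) (Fin n) ℝ)
    (hH' : ∀ i j, H' i j = H i j * (Wᵀ * A) i j / (Wᵀ * W * H) i j) :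
    ∑ i, ∑ j, (A i j - (W * H') i j) ^ 2 ≤
      ∑ i, ∑ j, (A i j - (W * H) i j) ^ 2 := by
  have hWWH : ∀ i j, (Wᵀ * W * H) i j = ∑ i', (∑ p, W p i * W p i') * H i' j := by
    intro i j
    rw [Matrix.mul_apply]
    refine Finset.sum_congr rfl fun i' _ => ?_
    congr 1
  have hWA : ∀ i j, (Wᵀ * A) i j = ∑ p, W p i * A p j := by
    intro i j
    rw [Matrix.mul_apply]
    simp [Matrix.transpose_apply]
  rw [Finset.sum_comm (s := Finset.univ) (t := Finset.univ),
    Finset.sum_comm (s := Finset.univ) (t := Finset.univ)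
      (f := fun i j => (A i j - (W * H) i j) ^ 2)]
  refine Finset.sum_le_sum fun j _ => ?_
  have step := nmf_col_step (fun p => A p j) W (fun i => H i j) (fun i => H' i j)
    (fun p i => hW p i) (fun i => hH i j)
    (fun i => by
      show 0 < ∑ i', (∑ p, W p i * W p i') * H i' j
      rw [← hWWH i j]; exact hpos i j)
    (fun i => by
      show H' i j = H i j * (∑ p, W p i * A p j) /
        ∑ i', (∑ p, W p i * W p i') * H i' j
      rw [hH' i j, hWA i j, hWWH i j])
  simpa [Matrix.mul_apply] using step
end

section
/- Let A be an m × n real matrix, W an m × k real matrix, and H a k × n real matrix, all with nonnegative entries, and suppose (WHHᵀ)_{ij} > 0 for all i, j. Define the updated matrix W' entrywise by W'_{ij} = W_{ij} · (AHᵀ)_{ij} / (WHHᵀ)_{ij}. Then ‖A − W'H‖² ≤ ‖A − WH‖², i.e., the divergence D(A‖WH) is non-increasing under the multiplicative W-update. -/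
/-!
For rows `a`, `w` of `A`, `W`, write `s = w (H Hᵀ)` and `r = (a Hᵀ - s) / s`, so that the update is `w' = w + w ∘ r`.
Expanding the square, the divergence changes by `-2 Q + (w ∘ r) H Hᵀ (w ∘ r)ᵀ` with
`Q = ∑ₐ wₐ sₐ rₐ² ≥ 0`. For a symmetric `S` with nonnegative entries and `w ≥ 0`, the Lee–Seung bound
`(w ∘ r) S (w ∘ r)ᵀ ≤ ∑ₐ wₐ (w S)ₐ rₐ²` holds because the gap is `½ ∑ₐ ∑_b wₐ S_ab w_b (rₐ - r_b)²`;
with `S = H Hᵀ` it bounds the quadratic term by `Q`, so the change is at most `-Q ≤ 0`.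
-/

open Matrix

section
variable {ι κ : Type*} [Fintype ι] [Fintype κ]

theorem dotProduct_mul_vecMul_mul_le {S : Matrix κ κ ℝ} (hS : S.IsSymm) (hS₀ : ∀ a b, 0 ≤ S a b)
    {w : κ → ℝ} (hw : ∀ a, 0 ≤ w a) (r : κ → ℝ) :
    (w * r) ⬝ᵥ ((w * r) ᵥ* S) ≤ ∑ a, w a * (w ᵥ* S) a * r a ^ 2 := by
  set f : κ → κ → ℝ := fun a b => w a * S a b * w b
  have hf : ∀ a b, f a b = f b a := fun a b => by
    simp only [f, ← hS.apply a b]; ring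
  have hlhs : (w * r) ⬝ᵥ ((w * r) ᵥ* S) = ∑ a, ∑ b, f a b * (r a * r b) := by
    simp only [dotProduct, vecMul, Finset.mul_sum, Pi.mul_apply, f]
    rw [Finset.sum_comm]
    refine Finset.sum_congr rfl fun a _ => Finset.sum_congr rfl fun b _ => by ring
  have hrhs : ∑ a, w a * (w ᵥ* S) a * r a ^ 2 = ∑ a, ∑ b, f a b * r a ^ 2 := by
    simp only [vecMul, dotProduct, Finset.mul_sum, Finset.sum_mul, f]
    refine Finset.sum_congr rfl fun a _ => Finset.sum_congr rfl fun b _ => ?_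
    rw [← hS.apply a b]; ring
  have hswap : ∑ a, ∑ b, f a b * r b ^ 2 = ∑ a, ∑ b, f a b * r a ^ 2 := by
    rw [Finset.sum_comm]
    simp only [hf]
  have hsq : 0 ≤ ∑ a, ∑ b, f a b * (r a - r b) ^ 2 :=
    Finset.sum_nonneg fun a _ => Finset.sum_nonneg fun b _ =>
      mul_nonneg (mul_nonneg (mul_nonneg (hw a) (hS₀ a b)) (hw b)) (sq_nonneg _)
  have hexpand : ∑ a, ∑ b, f a b * (r a - r b) ^ 2 =
      ∑ a, ∑ b, f a b * r a ^ 2 + ∑ a, ∑ b, f a b * r b ^ 2 - 2 * ∑ a, ∑ b, f a b * (r a * r b) := by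
    simp only [Finset.mul_sum, ← Finset.sum_add_distrib, ← Finset.sum_sub_distrib]
    exact Finset.sum_congr rfl fun a _ => Finset.sum_congr rfl fun b _ => by ring
  rw [hlhs, hrhs]
  linarith

theorem sub_vecMul_dotProduct_self (M : Matrix κ ι ℝ) (e : ι → ℝ) (d : κ → ℝ) :
    (e - d ᵥ* M) ⬝ᵥ (e - d ᵥ* M) =
      e ⬝ᵥ e - 2 * (d ⬝ᵥ (e ᵥ* Mᵀ)) + d ⬝ᵥ (d ᵥ* (M * Mᵀ)) := by
  rw [vecMul_transpose, ← vecMul_vecMul, vecMul_transpose, dotProduct_mulVec, dotProduct_mulVec]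
  simp only [sub_dotProduct, dotProduct_sub, dotProduct_comm e]
  ring

theorem sub_vecMul_dotProduct_self_le_of_multiplicative_update {M : Matrix κ ι ℝ}
    (hM : ∀ a j, 0 ≤ M a j) (x : ι → ℝ) {w w' : κ → ℝ} (hw : ∀ a, 0 ≤ w a)
    (hs : ∀ a, 0 < (w ᵥ* (M * Mᵀ)) a)
    (hw' : ∀ a, w' a = w a * (x ᵥ* Mᵀ) a / (w ᵥ* (M * Mᵀ)) a) :
    (x - w' ᵥ* M) ⬝ᵥ (x - w' ᵥ* M) ≤ (x - w ᵥ* M) ⬝ᵥ (x - w ᵥ* M) := by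
  set s := w ᵥ* (M * Mᵀ)
  set e := x - w ᵥ* M
  set r : κ → ℝ := fun a => (e ᵥ* Mᵀ) a / s a
  have hes : e ᵥ* Mᵀ = x ᵥ* Mᵀ - s := by rw [sub_vecMul, vecMul_vecMul]
  have hw'r : w' = w + w * r := funext fun a => by
    have := (hs a).ne'
    simp only [hw', Pi.add_apply, Pi.mul_apply, r, hes, Pi.sub_apply]
    field_simp
    ring
  have hcross : (w * r) ⬝ᵥ (e ᵥ* Mᵀ) = ∑ a, w a * s a * r a ^ 2 :=
    Finset.sum_congr rfl fun a _ => by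
      have := (hs a).ne'
      simp only [Pi.mul_apply, r]
      field_simp
  have hS : (M * Mᵀ).IsSymm := by
    rw [IsSymm, transpose_mul, transpose_transpose]
  have hS₀ : ∀ a b, 0 ≤ (M * Mᵀ) a b := fun a b =>
    Finset.sum_nonneg fun j _ => mul_nonneg (hM a j) (hM b j)
  have hquad := dotProduct_mul_vecMul_mul_le hS hS₀ hw r
  have hQ : 0 ≤ ∑ a, w a * s a * r a ^ 2 :=
    Finset.sum_nonneg fun a _ => mul_nonneg (mul_nonneg (hw a) (hs a).le) (sq_nonneg _)
  have hx : x - w' ᵥ* M = e - (w * r) ᵥ* M := by rw [hw'r, add_vecMul, sub_add_eq_sub_sub]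
  rw [hx, sub_vecMul_dotProduct_self, hcross]
  linarith
end

theorem nmf_W_update_nonincreasing_general
    {m n k : ℕ}
    (A : Matrix (Fin m) (Fin n) ℝ)
    (W : Matrix (Fin m) (Fin k) ℝ)
    (H : Matrix (Fin k) (Fin n) ℝ)
    (hW : ∀ i j, 0 ≤ W i j)
    (hH : ∀ i j, 0 ≤ H i j)
    (hpos : ∀ i j, 0 < (W * H * Hᵀ) i j)
    (W' : Matrix (Fin m) (Fin k) ℝ)
    (hW' : ∀ i j, W' i j = W i j * (A * Hᵀ) i j / (W * H * Hᵀ) i j) :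
    ∑ i, ∑ j, (A i j - (W' * H) i j) ^ 2 ≤
      ∑ i, ∑ j, (A i j - (W * H) i j) ^ 2 := by
  have hrow : ∀ (V : Matrix (Fin m) (Fin k) ℝ) i,
      ∑ j, (A i j - (V * H) i j) ^ 2 = (A i - V i ᵥ* H) ⬝ᵥ (A i - V i ᵥ* H) :=
    fun V i => by simp only [dotProduct, sq]; rfl
  rw [Matrix.mul_assoc] at hpos hW'
  refine Finset.sum_le_sum fun i _ => ?_
  rw [hrow, hrow]
  exact sub_vecMul_dotProduct_self_le_of_multiplicative_update hH (A i) (hW i) (hpos i) (hW' i)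

/-- The GNMF divergence `‖A - WH‖²` (squared Frobenius norm) is non-increasing
under the Lee–Seung multiplicative update of `W`. -/
theorem nmf_W_update_nonincreasing
    {m n k : ℕ}
    (A : Matrix (Fin m) (Fin n) ℝ)
    (W : Matrix (Fin m) (Fin k) ℝ)
    (H : Matrix (Fin k) (Fin n) ℝ)
    (hA : ∀ i j, 0 ≤ A i j)
    (hW : ∀ i j, 0 ≤ W i j)
    (hH : ∀ i j, 0 ≤ H i j)
    (hpos : ∀ i j, 0 < (W * H * Hᵀ) i j)
    (W' : Matrix (Fin m) (Fin k) ℝ)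
    (hW' : ∀ i j, W' i j = W i j * (A * Hᵀ) i j / (W * H * Hᵀ) i j) :
    ∑ i, ∑ j, (A i j - (W' * H) i j) ^ 2 ≤
      ∑ i, ∑ j, (A i j - (W * H) i j) ^ 2 :=
  nmf_W_update_nonincreasing_general A W H hW hH hpos W' hW'
end

section
/- Let A be an m × n real matrix, W an m × k real matrix, and H a k × n real matrix, with every entry of H strictly positive and (WᵀWH)_{ij} > 0 for all i, j. Define H' entrywise by H'_{ij} = H_{ij} · (WᵀA)_{ij} / (WᵀWH)_{ij}. Then H' = H if and only if WᵀA = WᵀWH, equivalently Wᵀ(A − WH) = 0; that is, a strictly positive H is a fixed point of the multiplicative update exactly when it is a stationary point of the divergence H ↦ ‖A − WH‖². -/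
open Matrix

theorem mul_div_eq_self_iff {K : Type*} [Field K] {a b c : K} (ha : a ≠ 0) (hc : c ≠ 0) :
    a * b / c = a ↔ b = c := by
  rw [mul_div_assoc, mul_eq_left₀ ha, div_eq_one_iff_eq hc]

theorem Matrix.eq_self_iff_of_apply_eq_mul_div {ι κ K : Type*} [Field K]
    {H N D H' : Matrix ι κ K} (hH : ∀ i j, H i j ≠ 0) (hD : ∀ i j, D i j ≠ 0)
    (hH' : ∀ i j, H' i j = H i j * N i j / D i j) :
    H' = H ↔ N = D := by
  simp only [← Matrix.ext_iff, hH', mul_div_eq_self_iff (hH _ _) (hD _ _)]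

/-- A strictly positive `H` is a fixed point of the Lee–Seung multiplicative
update exactly when `WᵀA = WᵀWH`, equivalently `Wᵀ(A - WH) = 0`, i.e. when `H`
is a stationary point of the divergence `H ↦ ‖A - WH‖²`. -/
theorem nmf_H_update_fixed_point_iff_stationary
    {m n k : ℕ}
    (A : Matrix (Fin m) (Fin n) ℝ)
    (W : Matrix (Fin m) (Fin k) ℝ)
    (H : Matrix (Fin k) (Fin n) ℝ)
    (hH : ∀ i j, 0 < H i j)
    (hpos : ∀ i j, 0 < (Wᵀ * W * H) i j)
    (H' : Matrix (Fin k) (Fin n) ℝ)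
    (hH' : ∀ i j, H' i j = H i j * (Wᵀ * A) i j / (Wᵀ * W * H) i j) :
    (H' = H ↔ Wᵀ * A = Wᵀ * W * H) ∧
      (Wᵀ * A = Wᵀ * W * H ↔ Wᵀ * (A - W * H) = 0) := by
  refine ⟨eq_self_iff_of_apply_eq_mul_div (fun i j ↦ (hH i j).ne') (fun i j ↦ (hpos i j).ne') hH',
    ?_⟩
  rw [Matrix.mul_sub, sub_eq_zero, Matrix.mul_assoc]
end
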